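/- Let (X,M,*) be a complete fuzzy metric space and T a fuzzy Ćirić–Matkowski contractive mapping that is uniformly asymptotically regular at some point x₀. Then T has a unique fixed point. -/
import Mathlib


open Filter

/-- A continuous t-norm on [0,1]. -/
def IsTNorm (star : ℝ → ℝ → ℝ) : Prop :=
  (∀ a ∈ Set.Icc (0:ℝ) 1, ∀ b ∈ Set.Icc (0:ℝ) 1, star a b ∈ Set.Icc (0:ℝ) 1) ∧
  (∀ a b, star a b = star b a) ∧
  (∀ a b c, star (star a b) c = star a (star b c)) ∧
  (∀ a ∈ Set.Icc (0:ℝ) 1, star a 1 = a) ∧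
  (∀ a b c d, a ≤ c → b ≤ d → star a b ≤ star c d) ∧
  ContinuousOn (fun p : ℝ × ℝ => star p.1 p.2) (Set.Icc 0 1 ×ˢ Set.Icc 0 1)

/-- A fuzzy metric space in the sense of George and Veeramani (axioms on M). -/
def IsFuzzyMetric {X : Type*} (M : X → X → ℝ → ℝ) (star : ℝ → ℝ → ℝ) : Prop :=
  IsTNorm star ∧
  (∀ x y : X, ∀ t : ℝ, 0 < t → 0 < M x y t ∧ M x y t ≤ 1) ∧
  (∀ x y : X, (∀ t : ℝ, 0 < t → M x y t = 1) ↔ x = y) ∧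
  (∀ x y : X, ∀ t : ℝ, M x y t = M y x t) ∧
  (∀ x y : X, ContinuousOn (M x y) (Set.Ioi (0:ℝ))) ∧
  (∀ x y z : X, ∀ s t : ℝ, 0 < s → 0 < t →
    M x z (s + t) ≥ star (M x y s) (M y z t))

/-- The strong triangle inequality. -/
def IsStrong {X : Type*} (M : X → X → ℝ → ℝ) (star : ℝ → ℝ → ℝ) : Prop :=
  ∀ x y z : X, ∀ t : ℝ, 0 < t → M x z t ≥ star (M x y t) (M y z t)

/-- M-Cauchy sequence. -/
def MCauchy {X : Type*} (M : X → X → ℝ → ℝ) (x : ℕ → X) : Prop :=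
  ∀ r ∈ Set.Ioo (0:ℝ) 1, ∀ t : ℝ, 0 < t →
    ∃ N : ℕ, ∀ m ≥ N, ∀ n ≥ N, M (x n) (x m) t > 1 - r

/-- Convergence of a sequence to a point in a fuzzy metric space. -/
def FuzzyTendsto {X : Type*} (M : X → X → ℝ → ℝ) (x : ℕ → X) (z : X) : Prop :=
  ∀ t : ℝ, 0 < t → Tendsto (fun n => M (x n) z t) atTop (nhds 1)

/-- M-completeness: every M-Cauchy sequence converges. -/
def MComplete {X : Type*} (M : X → X → ℝ → ℝ) : Prop :=
  ∀ x : ℕ → X, MCauchy M x → ∃ z : X, FuzzyTendsto M x z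

/-- Uniform asymptotic regularity of a sequence: for any positive sequence tᵢ ↘ 0,
M(xₙ, xₙ₊₁, tᵢ) → 1 uniformly in i. -/
def UnifAsympRegular {X : Type*} (M : X → X → ℝ → ℝ) (x : ℕ → X) : Prop :=
  ∀ ts : ℕ → ℝ, (∀ i, 0 < ts i) → StrictAnti ts → Tendsto ts atTop (nhds 0) →
    ∀ ε : ℝ, 0 < ε → ∃ N : ℕ, ∀ n ≥ N, ∀ i : ℕ, M (x n) (x (n+1)) (ts i) > 1 - ε

/-- Asymptotic regularity of a sequence. -/
def AsympRegular {X : Type*} (M : X → X → ℝ → ℝ) (x : ℕ → X) : Prop :=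
  ∀ t : ℝ, 0 < t → Tendsto (fun n => M (x n) (x (n+1)) t) atTop (nhds 1)

/-- Fuzzy Ćirić–Matkowski contractive mapping. -/
def FuzzyCM {X : Type*} (M : X → X → ℝ → ℝ) (T : X → X) : Prop :=
  (∀ x y : X, x ≠ y → ∀ t : ℝ, 0 < t → M (T x) (T y) t > M x y t) ∧
  ∀ t : ℝ, 0 < t → ∀ r ∈ Set.Ioo (0:ℝ) 1, ∃ ρ ∈ Set.Ioo r 1,
    ∀ x y : X, 1 - r > M x y t → M x y t > 1 - ρ → M (T x) (T y) t ≥ 1 - r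

section FuzzyCMAux

variable {X : Type*} {M : X → X → ℝ → ℝ} {star : ℝ → ℝ → ℝ}

lemma fcm_self (hFM : IsFuzzyMetric M star) (a : X) {t : ℝ} (ht : 0 < t) :
    M a a t = 1 := (hFM.2.2.1 a a).mpr rfl t ht

lemma fcm_bounds (hFM : IsFuzzyMetric M star) (a b : X) {t : ℝ} (ht : 0 < t) :
    M a b t ∈ Set.Icc (0:ℝ) 1 :=
  ⟨(hFM.2.1 a b t ht).1.le, (hFM.2.1 a b t ht).2⟩

lemma fcm_mono (hFM : IsFuzzyMetric M star) (a b : X) {s u : ℝ} (hs : 0 < s) (hsu : s ≤ u) :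
    M a b s ≤ M a b u := by
  rcases eq_or_lt_of_le hsu with h | h
  · rw [h]
  · have h1 : M a a (u - s) = 1 := fcm_self hFM a (by linarith)
    have htri := hFM.2.2.2.2.2 a a b (u - s) s (by linarith) hs
    rw [h1] at htri
    have hb := fcm_bounds hFM a b hs
    have hst : star 1 (M a b s) = M a b s := by
      rw [hFM.1.2.1]; exact hFM.1.2.2.2.1 _ hb
    rw [hst] at htri
    have he : u - s + s = u := by ring
    rw [he] at htri
    exact htri

lemma fcm_nonexp (hFM : IsFuzzyMetric M star) {T : X → X} (hT : FuzzyCM M T)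
    (a b : X) {t : ℝ} (ht : 0 < t) : M a b t ≤ M (T a) (T b) t := by
  by_cases hab : a = b
  · subst hab; rw [fcm_self hFM a ht, fcm_self hFM (T a) ht]
  · exact (hT.1 a b hab t ht).le

lemma tnorm_window (hTN : IsTNorm star) {b₀ c : ℝ}
    (hb₀ : b₀ ∈ Set.Icc (0:ℝ) 1) (hc : c < b₀) :
    ∃ δ > 0, ∀ a b : ℝ, a ∈ Set.Icc (0:ℝ) 1 → b ∈ Set.Icc (0:ℝ) 1 →
      1 - δ < a → b₀ ≤ b → c < star a b := by
  obtain ⟨hbd, hcomm, hassoc, hunit, hmono, hcont⟩ := hTN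
  have hmem : ((1:ℝ), b₀) ∈ Set.Icc (0:ℝ) 1 ×ˢ Set.Icc (0:ℝ) 1 :=
    Set.mem_prod.mpr ⟨⟨zero_le_one, le_refl 1⟩, hb₀⟩
  have hcw : ContinuousWithinAt (fun p : ℝ × ℝ => star p.1 p.2)
      (Set.Icc (0:ℝ) 1 ×ˢ Set.Icc (0:ℝ) 1) (1, b₀) := hcont _ hmem
  have hfx : star 1 b₀ = b₀ := by rw [hcomm]; exact hunit _ hb₀
  have hcw2 : Filter.Tendsto (fun p : ℝ × ℝ => star p.1 p.2)
      (nhdsWithin (1, b₀) (Set.Icc (0:ℝ) 1 ×ˢ Set.Icc (0:ℝ) 1)) (nhds (star 1 b₀)) := hcw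
  rw [hfx] at hcw2
  have hev : ∀ᶠ p in nhdsWithin ((1:ℝ), b₀) (Set.Icc (0:ℝ) 1 ×ˢ Set.Icc (0:ℝ) 1),
      c < star p.1 p.2 := hcw2.eventually (eventually_gt_nhds hc)
  obtain ⟨ε, hε, hball⟩ := Metric.mem_nhdsWithin_iff.mp hev
  refine ⟨ε, hε, fun a b ha hb h1a hb0b => ?_⟩
  have h1 : c < star a b₀ := by
    have hmem2 : ((a, b₀) : ℝ × ℝ) ∈ Metric.ball ((1:ℝ), b₀) ε ∩
        (Set.Icc (0:ℝ) 1 ×ˢ Set.Icc (0:ℝ) 1) := by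
      refine ⟨?_, Set.mem_prod.mpr ⟨ha, hb₀⟩⟩
      rw [Metric.mem_ball, Prod.dist_eq]
      have h2 : dist a (1:ℝ) < ε := by
        rw [Real.dist_eq, abs_lt]
        constructor <;> linarith [ha.2]
      have h3 : dist b₀ b₀ < ε := by simpa using hε
      exact max_lt h2 h3
    exact hball hmem2
  calc c < star a b₀ := h1
    _ ≤ star a b := hmono _ _ _ _ le_rfl hb0b

end FuzzyCMAux

theorem fuzzyCM_fixed_point_unif {X : Type*}
    (M : X → X → ℝ → ℝ) (star : ℝ → ℝ → ℝ)
    (hFM : IsFuzzyMetric M star) (hcomp : MComplete M)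
    (T : X → X) (hT : FuzzyCM M T)
    (x₀ : X) (hreg : UnifAsympRegular M (fun n : ℕ => T^[n] x₀)) :
    ∃! z : X, T z = z := by
  classical
  set x : ℕ → X := fun n : ℕ => T^[n] x₀ with hxdef
  have hxsucc : ∀ n, x (n+1) = T (x n) := fun n => Function.iterate_succ_apply' T n x₀
  -- the orbit is M-Cauchy
  have hcauchy : MCauchy M x := by
    intro r hr t ht
    obtain ⟨hr0, hr1⟩ := hr
    have hr'0 : 0 < r / 2 := by linarith
    have hr'1 : r / 2 < 1 := by linarith
    have ht2 : 0 < t / 2 := by linarith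
    -- choose contraction windows at every time in (t/2, t)
    have H : ∀ s : ℝ, ∃ ρ : ℝ, t/2 < s → s < t →
        (r/2 < ρ ∧ ρ < 1) ∧ ∀ a b : X, 1 - r/2 > M a b s → M a b s > 1 - ρ →
          M (T a) (T b) s ≥ 1 - r/2 := by
      intro s
      by_cases hs : t/2 < s ∧ s < t
      · obtain ⟨ρ, hρ, hw⟩ := hT.2 s (lt_trans ht2 hs.1) (r/2) ⟨hr'0, hr'1⟩
        exact ⟨ρ, fun _ _ => ⟨⟨hρ.1, hρ.2⟩, hw⟩⟩
      · exact ⟨1, fun h1 h2 => absurd ⟨h1, h2⟩ hs⟩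
    choose g hg using H
    -- pigeonhole: some level set is infinite
    have hcov : Set.Ioo (t/2) t ⊆
        ⋃ k : ℕ, {s : ℝ | (t/2 < s ∧ s < t) ∧ r/2 + 1/(k+1) ≤ g s} := by
      intro s hs
      obtain ⟨hs1, hs2⟩ := hs
      have hgs := (hg s hs1 hs2).1.1
      obtain ⟨k, hk⟩ := exists_nat_one_div_lt (show 0 < g s - r/2 by linarith)
      exact Set.mem_iUnion.mpr ⟨k, ⟨⟨hs1, hs2⟩, by linarith⟩⟩
    have hK : ∃ k : ℕ, ¬ ({s : ℝ | (t/2 < s ∧ s < t) ∧ r/2 + 1/(k+1) ≤ g s}).Finite := by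
      by_contra hfin
      push_neg at hfin
      have hcnt : (Set.Ioo (t/2) t).Countable :=
        Set.Countable.mono hcov (Set.countable_iUnion fun k => (hfin k).countable)
      have hmk := Cardinal.mk_Ioo_real (show t/2 < t by linarith)
      rw [← Cardinal.le_aleph0_iff_set_countable, hmk] at hcnt
      exact absurd hcnt (not_le.mpr Cardinal.aleph0_lt_continuum)
    obtain ⟨k, hk⟩ := hK
    set S : Set ℝ := {s : ℝ | (t/2 < s ∧ s < t) ∧ r/2 + 1/(k+1) ≤ g s} with hSdef
    have hSinf : S.Infinite := hk
    set ρ : ℝ := r/2 + 1/(k+1) with hρdef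
    have hρr' : r/2 < ρ := by
      have h1 : (0:ℝ) < 1/(k+1) := by positivity
      linarith
    have hρ0 : 0 < ρ := lt_trans hr'0 hρr'
    -- uniform window property on S
    have W : ∀ s ∈ S, ∀ a b : X, 1 - ρ < M a b s → 1 - r/2 ≤ M (T a) (T b) s := by
      intro s hs a b hab
      obtain ⟨⟨hs1, hs2⟩, hks⟩ := hs
      have hks' : ρ ≤ g s := by rw [hρdef]; exact hks
      have hspos : 0 < s := lt_trans ht2 hs1
      by_cases hcase : 1 - r/2 > M a b s
      · exact (hg s hs1 hs2).2 a b hcase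
          (lt_of_le_of_lt (by linarith : 1 - g s ≤ 1 - ρ) hab)
      · push_neg at hcase
        exact le_trans hcase (fcm_nonexp hFM hT a b hspos)
    -- δ from continuity of the t-norm
    obtain ⟨δ, hδ0, hδ⟩ := tnorm_window hFM.1 (b₀ := 1 - r/2)
      ⟨by linarith, by linarith⟩ (show 1 - ρ < 1 - r/2 by linarith)
    -- uniform asymptotic regularity at all small times
    have hts0 : ∀ i : ℕ, 0 < ((1/2 : ℝ)^(i+1)) := fun i => by positivity
    have htsanti : StrictAnti (fun i : ℕ => (1/2 : ℝ)^(i+1)) := by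
      intro i j hij
      exact pow_lt_pow_right_of_lt_one₀ (by norm_num) (by norm_num) (by omega)
    have htslim : Filter.Tendsto (fun i : ℕ => (1/2 : ℝ)^(i+1)) Filter.atTop (nhds 0) := by
      have h := tendsto_pow_atTop_nhds_zero_of_lt_one
        (show (0:ℝ) ≤ 1/2 by norm_num) (show (1:ℝ)/2 < 1 by norm_num)
      exact h.comp (Filter.tendsto_add_atTop_nat 1)
    obtain ⟨N₁, hN₁⟩ := hreg (fun i : ℕ => (1/2 : ℝ)^(i+1)) hts0 htsanti htslim δ hδ0
    have AR : ∀ n, N₁ ≤ n → ∀ c : ℝ, 0 < c → 1 - δ < M (x n) (x (n+1)) c := by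
      intro n hn c hc
      obtain ⟨i, hi⟩ := exists_pow_lt_of_lt_one hc (show (1:ℝ)/2 < 1 by norm_num)
      have hle : (1/2 : ℝ)^(i+1) ≤ c := by
        have h1 : (0:ℝ) < (1/2 : ℝ)^i := by positivity
        have h2 : (1/2 : ℝ)^(i+1) ≤ (1/2 : ℝ)^i := by
          rw [pow_succ]; nlinarith
        linarith
      have h2 := hN₁ n hn i
      calc 1 - δ < M (x n) (x (n+1)) ((1/2 : ℝ)^(i+1)) := h2
        _ ≤ M (x n) (x (n+1)) c := fcm_mono hFM _ _ (hts0 i) hle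
    -- main chain estimate
    have main : ∀ n m : ℕ, N₁ + 1 ≤ n → n < m → 1 - r < M (x n) (x m) t := by
      intro n m hn hnm
      set n' : ℕ := n - 1 with hn'def
      have hn'N : N₁ ≤ n' := by omega
      have hn'succ : n' + 1 = n := by omega
      set G : ℕ := m - n with hGdef
      -- a strictly increasing chain of G+1 times in S
      have e : ℕ ↪ ↥S := Set.Infinite.natEmbedding S hSinf
      have hecoe : ∀ i : ℕ, (e i : ℝ) ∈ S := fun i => (e i).2
      have hinj : Function.Injective (fun i : ℕ => (e i : ℝ)) :=
        fun i j hij => e.injective (Subtype.ext hij)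
      set F : Finset ℝ := (Finset.range (G+1)).image (fun i : ℕ => (e i : ℝ)) with hFdef
      have hFcard : F.card = G + 1 := by
        rw [hFdef, Finset.card_image_of_injective _ hinj, Finset.card_range]
      have hFS : ∀ y ∈ F, y ∈ S := by
        intro y hy
        rw [hFdef, Finset.mem_image] at hy
        obtain ⟨i, _, rfl⟩ := hy
        exact hecoe i
      set u : Fin (G+1) → ℝ := fun j => ((F.orderIsoOfFin hFcard) j : ℝ) with hudef
      have humem : ∀ j, u j ∈ S := fun j => hFS _ ((F.orderIsoOfFin hFcard) j).2
      have humono : StrictMono u := by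
        intro i j hij
        exact Subtype.coe_lt_coe.mpr ((F.orderIsoOfFin hFcard).strictMono hij)
      -- induction along the chain
      have key : ∀ j : ℕ, ∀ hj : j < G + 1, 1 - ρ < M (x n') (x (n' + j)) (u ⟨j, hj⟩) := by
        intro j
        induction j with
        | zero =>
          intro hj
          have hpos : 0 < u ⟨0, hj⟩ := lt_trans ht2 (humem _).1.1
          rw [Nat.add_zero, fcm_self hFM _ hpos]
          linarith
        | succ i ih =>
          intro hj
          have hi : i < G + 1 := by omega
          have IH := ih hi
          have hamem := humem ⟨i, hi⟩
          have hapos : 0 < u ⟨i, hi⟩ := lt_trans ht2 hamem.1.1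
          have hstep : 1 - r/2 ≤ M (T (x n')) (T (x (n' + i))) (u ⟨i, hi⟩) :=
            W _ hamem _ _ IH
          rw [← hxsucc n', ← hxsucc (n' + i)] at hstep
          have hab : u ⟨i, hi⟩ < u ⟨i+1, hj⟩ := humono (by simp [Fin.mk_lt_mk])
          have htri := hFM.2.2.2.2.2 (x n') (x (n'+1)) (x (n'+i+1))
            (u ⟨i+1, hj⟩ - u ⟨i, hi⟩) (u ⟨i, hi⟩) (by linarith) hapos
          have hsum : u ⟨i+1, hj⟩ - u ⟨i, hi⟩ + u ⟨i, hi⟩ = u ⟨i+1, hj⟩ := by ring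
          rw [hsum] at htri
          have hARn := AR n' hn'N _ (show 0 < u ⟨i+1, hj⟩ - u ⟨i, hi⟩ by linarith)
          have hstar := hδ _ _ (fcm_bounds hFM _ _ (by linarith))
            (fcm_bounds hFM _ _ hapos) hARn hstep
          have hidx : n' + (i+1) = n' + i + 1 := by omega
          rw [hidx]
          exact lt_of_lt_of_le hstar htri
      -- final bump and lift to time t
      have hfin := key G (Nat.lt_succ_self G)
      have hGmem := humem ⟨G, Nat.lt_succ_self G⟩
      have hGpos : 0 < u ⟨G, Nat.lt_succ_self G⟩ := lt_trans ht2 hGmem.1.1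
      have hlast : 1 - r/2 ≤ M (T (x n')) (T (x (n' + G))) (u ⟨G, Nat.lt_succ_self G⟩) :=
        W _ hGmem _ _ hfin
      rw [← hxsucc n', ← hxsucc (n' + G)] at hlast
      have hidx1 : n' + 1 = n := hn'succ
      have hidx2 : n' + G + 1 = m := by omega
      rw [hidx1, hidx2] at hlast
      have hlift : M (x n) (x m) (u ⟨G, Nat.lt_succ_self G⟩) ≤ M (x n) (x m) t :=
        fcm_mono hFM _ _ hGpos (le_of_lt hGmem.1.2)
      have : 1 - r < 1 - r/2 := by linarith
      linarith
    refine ⟨N₁ + 1, fun m hm n hn => ?_⟩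
    rcases lt_trichotomy n m with h | h | h
    · exact main n m hn h
    · rw [h, fcm_self hFM _ ht]; linarith
    · rw [hFM.2.2.2.1]; exact main m n hm h
  -- limit point is a fixed point
  obtain ⟨z, hz⟩ := hcomp x hcauchy
  have hfix : T z = z := by
    apply (hFM.2.2.1 (T z) z).mp
    intro t ht
    have ht2 : 0 < t/2 := by linarith
    have hub := (hFM.2.1 (T z) z t ht).2
    by_contra hne
    have hc0 : 0 < M (T z) z t := (hFM.2.1 (T z) z t ht).1
    have hlt : M (T z) z t < 1 := lt_of_le_of_ne hub hne
    set c : ℝ := M (T z) z t with hcdef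
    obtain ⟨δ, hδ0, hδ⟩ := tnorm_window hFM.1 (b₀ := (1+c)/2)
      ⟨by linarith, by linarith⟩ (show c < (1+c)/2 by linarith)
    set δ' : ℝ := min δ ((1 - c)/2) with hδ'def
    have hδ'0 : 0 < δ' := lt_min hδ0 (by linarith)
    have hev := (hz (t/2) ht2).eventually (eventually_gt_nhds (show 1 - δ' < 1 by linarith))
    obtain ⟨N₂, hN₂⟩ := Filter.eventually_atTop.mp hev
    have h1 : 1 - δ' < M (x N₂) z (t/2) := hN₂ N₂ le_rfl
    have h2 : 1 - δ' < M (x (N₂+1)) z (t/2) := hN₂ (N₂+1) (Nat.le_succ _)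
    have htri := hFM.2.2.2.2.2 (T z) (x (N₂+1)) z (t/2) (t/2) ht2 ht2
    have hhalf : t/2 + t/2 = t := by ring
    rw [hhalf] at htri
    have hA : M (x N₂) z (t/2) ≤ M (T z) (x (N₂+1)) (t/2) := by
      rw [hxsucc]
      calc M (x N₂) z (t/2) = M z (x N₂) (t/2) := hFM.2.2.2.1 _ _ _
        _ ≤ M (T z) (T (x N₂)) (t/2) := fcm_nonexp hFM hT _ _ ht2
    have hmono := hFM.1.2.2.2.2.1 (M (x N₂) z (t/2)) (M (x (N₂+1)) z (t/2))
      (M (T z) (x (N₂+1)) (t/2)) (M (x (N₂+1)) z (t/2)) hA le_rfl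
    have hstar : c < star (M (x N₂) z (t/2)) (M (x (N₂+1)) z (t/2)) := by
      apply hδ _ _ (fcm_bounds hFM _ _ ht2) (fcm_bounds hFM _ _ ht2)
      · have hh : δ' ≤ δ := min_le_left _ _
        linarith
      · have hh : δ' ≤ (1-c)/2 := min_le_right _ _
        linarith
    have hfinal : c < M (T z) z t := lt_of_lt_of_le hstar (le_trans hmono htri)
    exact lt_irrefl _ hfinal
  refine ⟨z, hfix, fun y hy => ?_⟩
  by_contra hne
  have h := hT.1 y z hne 1 one_pos
  rw [hy, hfix] at h
  exact lt_irrefl _ h
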